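/- The function U_ω(x) = √2 μ (√(1+ω) cosh(μx) − i√(1−ω) sinh(μx)) / (ω + cosh(2μx)), with μ = √(1−ω²) and ω ∈ (−1,1), satisfies the first-order ODE i U' − ω U + conj(U) = |U|² U. -/

import Mathlib

/-!
With `a = √(1 + ω)`, `b = √(1 - ω)` and `μ = a b`, the profile is `U = √2 μ / V` for
`V(x) = a cosh(μx) + i b sinh(μx)`, because its denominator `ω + cosh(2μx)` is `|V|²`.
For `U = k / V` with `k` real, the equation is equivalent to `V² - i V' conj V - ω |V|² = k²`,
which for this `V` is a polynomial identity in `cosh(μx), sinh(μx)` modulo `cosh² - sinh² = 1`.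
-/

open Complex ComplexConjugate

noncomputable def thirringSoliton (ω x : ℝ) : ℂ :=
  (↑(Real.sqrt 2 * Real.sqrt (1 - ω ^ 2)) : ℂ) *
    ((↑(Real.sqrt (1 + ω) * Real.cosh (Real.sqrt (1 - ω ^ 2) * x)) : ℂ)
      - Complex.I * (↑(Real.sqrt (1 - ω) * Real.sinh (Real.sqrt (1 - ω ^ 2) * x)) : ℂ)) /
    (↑(ω + Real.cosh (2 * Real.sqrt (1 - ω ^ 2) * x)) : ℂ)

theorem thirring_ode_ofReal_div {V : ℝ → ℂ} {x : ℝ} (k ω : ℝ)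
    (hV : DifferentiableAt ℝ V x) (hx : V x ≠ 0)
    (h : V x ^ 2 - I * deriv V x * conj (V x) - ω * ‖V x‖ ^ 2 = (k : ℂ) ^ 2) :
    I * deriv (fun y => (k : ℂ) / V y) x - ω * (k / V x) + conj ((k : ℂ) / V x)
      = (‖(k : ℂ) / V x‖ : ℂ) ^ 2 * (k / V x) := by
  have hd : deriv (fun y => (k : ℂ) / V y) x = -(k * deriv V x) / V x ^ 2 := by
    have := ((hasDerivAt_const x (k : ℂ)).div hV.hasDerivAt hx).deriv
    rwa [zero_mul, zero_sub] at this
  have hc : conj (V x) ≠ 0 := (map_ne_zero _).mpr hx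
  rw [← mul_conj'] at h ⊢
  rw [hd, map_div₀, conj_ofReal]
  field_simp
  linear_combination (k : ℂ) * h

noncomputable def coshSinhCurve (a b m y : ℝ) : ℂ :=
  (a * Real.cosh (m * y) : ℝ) + (b * Real.sinh (m * y) : ℝ) * I

theorem hasDerivAt_coshSinhCurve (a b m x : ℝ) :
    HasDerivAt (coshSinhCurve a b m)
      ((m * (a * Real.sinh (m * x)) : ℝ) + (m * (b * Real.cosh (m * x)) : ℝ) * I) x := by
  have hlin : HasDerivAt (fun y : ℝ => m * y) m x := by
    simpa using (hasDerivAt_id x).const_mul m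
  have hc := (((Real.hasDerivAt_cosh _).comp x hlin).const_mul a).ofReal_comp
  have hs := (((Real.hasDerivAt_sinh _).comp x hlin).const_mul b).ofReal_comp
  exact (hc.add (hs.mul_const I)).congr_deriv (by push_cast; ring)

theorem coshSinhCurve_ne_zero {a : ℝ} (ha : 0 < a) (b m x : ℝ) : coshSinhCurve a b m x ≠ 0 := by
  intro h
  have hre := congrArg re h
  simp only [coshSinhCurve, add_re, ofReal_re, mul_re, I_re, I_im, ofReal_im, zero_re] at hre
  nlinarith [Real.cosh_pos (m * x)]

theorem normSq_coshSinhCurve {a b ω : ℝ} (ha : a ^ 2 = 1 + ω) (hb : b ^ 2 = 1 - ω) (m x : ℝ) :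
    normSq (coshSinhCurve a b m x) = ω + Real.cosh (2 * m * x) := by
  rw [coshSinhCurve, normSq_add_mul_I, mul_assoc, Real.cosh_two_mul]
  linear_combination Real.cosh (m * x) ^ 2 * ha + Real.sinh (m * x) ^ 2 * hb
    + ω * Real.cosh_sq_sub_sinh_sq (m * x)

theorem coshSinhCurve_thirring_identity {a b ω : ℝ} (ha : a ^ 2 = 1 + ω) (hb : b ^ 2 = 1 - ω)
    (x : ℝ) :
    let V := coshSinhCurve a b (a * b)
    V x ^ 2 - I * deriv V x * conj (V x) - ω * ‖V x‖ ^ 2 = ((2 * (a * b) ^ 2 : ℝ) : ℂ) := by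
  intro V
  rw [(hasDerivAt_coshSinhCurve a b (a * b) x).deriv, ← mul_conj']
  have hcs := Real.cosh_sq_sub_sinh_sq (a * b * x)
  set c := Real.cosh (a * b * x)
  set s := Real.sinh (a * b * x)
  apply Complex.ext <;>
    simp only [V, coshSinhCurve, sq, map_add, map_mul, conj_ofReal, conj_I, mul_re, mul_im, add_re,
      add_im, sub_re, sub_im, ofReal_re, ofReal_im, I_re, I_im, neg_re, neg_im]
  · linear_combination (c ^ 2 * (1 - ω) - b ^ 2) * ha - (s ^ 2 * (1 + ω) + (1 + ω)) * hb
      + (a ^ 2 * b ^ 2 + 1 - ω ^ 2) * hcs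
  · linear_combination -a * b * c * s * (ha + hb)

theorem thirringSoliton_eq_div_coshSinhCurve {ω : ℝ} (h₁ : -1 ≤ ω) (h₂ : ω ≤ 1) :
    thirringSoliton ω = fun x => ((√2 * (√(1 + ω) * √(1 - ω)) : ℝ) : ℂ) /
      coshSinhCurve √(1 + ω) √(1 - ω) (√(1 + ω) * √(1 - ω)) x := by
  have hμ : √(1 - ω ^ 2) = √(1 + ω) * √(1 - ω) := by
    rw [← Real.sqrt_mul (by linarith)]
    congr 1
    ring
  funext x
  set V := coshSinhCurve √(1 + ω) √(1 - ω) (√(1 + ω) * √(1 - ω)) x with hV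
  have hconj : conj V = ((√(1 + ω) * Real.cosh (√(1 + ω) * √(1 - ω) * x) : ℝ) : ℂ)
      - I * ((√(1 - ω) * Real.sinh (√(1 + ω) * √(1 - ω) * x) : ℝ) : ℂ) := by
    simp only [hV, coshSinhCurve, map_add, map_mul, conj_ofReal, conj_I]
    ring
  rw [thirringSoliton, hμ, ← hconj,
    ← normSq_coshSinhCurve (Real.sq_sqrt (by linarith)) (Real.sq_sqrt (by linarith)), ← hV,
    div_eq_mul_inv _ V, inv_def, ofReal_inv]
  ring

theorem thirringSoliton_ode (ω : ℝ) (hω : ω ∈ Set.Ioo (-1 : ℝ) 1) (x : ℝ) :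
    Complex.I * deriv (thirringSoliton ω) x - (ω : ℂ) * thirringSoliton ω x
      + (starRingEnd ℂ) (thirringSoliton ω x)
      = (↑‖thirringSoliton ω x‖ : ℂ) ^ 2 * thirringSoliton ω x := by
  obtain ⟨h₁, h₂⟩ := hω
  have ha : √(1 + ω) ^ 2 = 1 + ω := Real.sq_sqrt (by linarith)
  have hb : √(1 - ω) ^ 2 = 1 - ω := Real.sq_sqrt (by linarith)
  have h2 : ((√2 : ℝ) : ℂ) ^ 2 = 2 := by exact_mod_cast Real.sq_sqrt zero_le_two
  rw [thirringSoliton_eq_div_coshSinhCurve h₁.le h₂.le]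
  refine thirring_ode_ofReal_div _ ω (hasDerivAt_coshSinhCurve _ _ _ x).differentiableAt
    (coshSinhCurve_ne_zero (Real.sqrt_pos.2 (by linarith)) _ _ x) ?_
  rw [coshSinhCurve_thirring_identity ha hb x]
  push_cast
  linear_combination -((√(1 + ω) : ℂ) * √(1 - ω)) ^ 2 * h2
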